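/- A torsion-free group that contains an infinite cyclic subgroup of finite index is itself infinite cyclic. -/

import Mathlib

/-!
The normal core `N` of `H` is infinite cyclic, so conjugation by any `g` sends a generator `a`
of `N` to `a` or `a⁻¹`. Inversion is impossible: `g ^ [G : N]` lies in `N` and commutes with `g`,
so it is inverted by conjugation and hence trivial; then `g = 1` and `a = a⁻¹`, contradicting
torsion-freeness. So `N` is central, the centre
has finite index, and the transfer `g ↦ g ^ [G : Z(G)]` embeds `G` into its centre: `G` is
abelian. Then `g ↦ g ^ [G : H]` embeds `G` into `H ≅ ℤ`, and `G` is infinite cyclic.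
-/

open Subgroup

section

variable {G : Type*} [Group G]

theorem eq_one_of_pow_eq_one_of_torsionFree (htf : ∀ g : G, g ≠ 1 → ¬IsOfFinOrder g) {g : G}
    {n : ℕ} (hn : n ≠ 0) (h : g ^ n = 1) : g = 1 :=
  not_imp_not.1 (htf g) (isOfFinOrder_iff_pow_eq_one.2 ⟨n, Nat.pos_of_ne_zero hn, h⟩)

theorem conj_eq_self_or_inv_of_mem_zpowers {a g : G} (ha : ¬IsOfFinOrder a)
    (h₁ : g * a * g⁻¹ ∈ zpowers a) (h₂ : g⁻¹ * a * g ∈ zpowers a) :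
    g * a * g⁻¹ = a ∨ g * a * g⁻¹ = a⁻¹ := by
  obtain ⟨k, hk⟩ := mem_zpowers_iff.1 h₁
  obtain ⟨j, hj⟩ := mem_zpowers_iff.1 h₂
  have hjk : a ^ (j * k) = a ^ (1 : ℤ) := by
    rw [zpow_mul, hj]
    nth_rw 2 [← inv_inv g]
    rw [conj_zpow, hk]
    group
  rcases Int.eq_one_or_neg_one_of_mul_eq_one' (injective_zpow_iff_not_isOfFinOrder.2 ha hjk)
    with ⟨-, rfl⟩ | ⟨-, rfl⟩
  · exact .inl (by rw [← hk, zpow_one])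
  · exact .inr (by rw [← hk, zpow_neg_one])

theorem eq_one_of_conj_eq_inv (htf : ∀ g : G, g ≠ 1 → ¬IsOfFinOrder g) {a g : G}
    (h : g * a * g⁻¹ = a⁻¹) {n : ℕ} (hn : n ≠ 0) (hgn : g ^ n ∈ zpowers a) : a = 1 := by
  obtain ⟨k, hk⟩ := mem_zpowers_iff.1 hgn
  have hinv : a ^ (-k) = a ^ k := by
    rw [zpow_neg, ← inv_zpow, ← h, conj_zpow, hk, (Commute.self_pow g n).eq,
      mul_inv_cancel_right]
  have hk1 : a ^ k = 1 :=
    eq_one_of_pow_eq_one_of_torsionFree htf two_ne_zero <| by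
      rw [sq]; nth_rw 2 [← hinv]; rw [zpow_neg, mul_inv_cancel]
  obtain rfl : g = 1 := eq_one_of_pow_eq_one_of_torsionFree htf hn (hk ▸ hk1)
  rw [one_mul, inv_one, mul_one, eq_inv_iff_mul_eq_one, ← sq] at h
  exact eq_one_of_pow_eq_one_of_torsionFree htf two_ne_zero h

theorem Subgroup.le_center_of_isCyclic (htf : ∀ g : G, g ≠ 1 → ¬IsOfFinOrder g)
    (N : Subgroup G) [N.Normal] [N.FiniteIndex] [IsCyclic N] : N ≤ center G := by
  obtain ⟨a, rfl⟩ := N.isCyclic_iff_exists_zpowers_eq_top.1 ‹_›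
  rcases eq_or_ne a 1 with rfl | ha
  · simp
  rw [zpowers_le, mem_center_iff]
  intro g
  have hN : (zpowers a).Normal := ‹_›
  rcases conj_eq_self_or_inv_of_mem_zpowers (htf a ha)
    (hN.conj_mem a (mem_zpowers a) g) (hN.conj_mem' a (mem_zpowers a) g) with h | h
  · exact mul_inv_eq_iff_eq_mul.1 h
  · exact absurd (eq_one_of_conj_eq_inv htf h FiniteIndex.index_ne_zero (pow_index_mem _ g)) ha

theorem isMulCommutative_of_finiteIndex_center (htf : ∀ g : G, g ≠ 1 → ¬IsOfFinOrder g)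
    [(center G).FiniteIndex] : IsMulCommutative G := by
  have hT : Function.Injective (MonoidHom.transferCenterPow G) := by
    refine (injective_iff_map_eq_one _).2 fun g hg ↦ ?_
    rw [Subtype.ext_iff, MonoidHom.transferCenterPow_apply] at hg
    exact eq_one_of_pow_eq_one_of_torsionFree htf FiniteIndex.index_ne_zero hg
  exact ⟨⟨fun g h ↦ hT (by rw [map_mul, map_mul, mul_comm'])⟩⟩

open scoped IsMulCommutative in
theorem Subgroup.exists_injective_hom_of_finiteIndex [IsMulCommutative G]
    (htf : ∀ g : G, g ≠ 1 → ¬IsOfFinOrder g) (H : Subgroup G) [H.FiniteIndex] :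
    ∃ f : G →* H, Function.Injective f :=
  ⟨(powMonoidHom H.index).codRestrict H H.pow_index_mem,
    (injective_iff_map_eq_one _).2 fun _ hg ↦
      eq_one_of_pow_eq_one_of_torsionFree htf FiniteIndex.index_ne_zero (congrArg Subtype.val hg)⟩

end

/-- A torsion-free group containing an infinite cyclic subgroup of finite index
is itself infinite cyclic. -/
theorem torsionFree_virtually_Z_is_Z {G : Type*} [Group G]
    (htf : ∀ g : G, g ≠ 1 → ¬IsOfFinOrder g)
    (H : Subgroup G) (hH : H.FiniteIndex) (hZ : Nonempty (H ≃* Multiplicative ℤ)) :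
    Nonempty (G ≃* Multiplicative ℤ) := by
  obtain ⟨e⟩ := hZ
  have : IsCyclic H := isCyclic_of_injective e.toMonoidHom e.injective
  have : Infinite G := .of_injective _ (H.subtype_injective.comp e.symm.injective)
  have : IsCyclic H.normalCore := isCyclic_of_le H.normalCore_le
  have : (center G).FiniteIndex := finiteIndex_of_le (H.normalCore.le_center_of_isCyclic htf)
  have : IsMulCommutative G := isMulCommutative_of_finiteIndex_center htf
  obtain ⟨f, hf⟩ := H.exists_injective_hom_of_finiteIndex htf
  have : IsCyclic G := isCyclic_of_injective f hf
  exact ⟨intCyclicMulEquiv.symm⟩
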